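/- arXiv:math/9811102 — 2 statements merged into one kernel-verified Lean document; each statement's English description precedes it below -/
import Mathlib

section
/- Let $C_n=\langle x\rangle$ be cyclic of order $n$. For every $\alpha\in\mathbb{B}_{C_n}$ one has $\theta(-\alpha)=\overline{\theta(\alpha)}$; consequently $\theta(\alpha)+\overline{\theta(\alpha)}=0$, i.e. the image of $\theta$ is contained in $\mathbb{A}_{C_n}=\{a\in\widetilde{R_{\mathbb{C}}C_n} : a+\bar a=0\}$. -/
/-! Every element of `𝔹_{C_n}` is the class of a list `L` with product `1`, and `-[L] = [L⁻¹]`.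
Complex conjugation sends `ρ_j` to `ρ_{n-j}`, while inverting every `x^{i_s}` replaces `r_{sj}`
by `r_{s,n-j}`; as the coefficients of `θ [L]` are real, conjugating it and reindexing `j ↦ n - j`
gives `θ [L⁻¹]`. These coefficients are integers because `∑ₛ kₛ r_{sj} ≡ j ∑ₛ iₛ ≡ 0 (mod n)`,
so `θ [L]` is indeed a virtual character. -/

open Finsupp

/-- The natural map from conjugacy classes of `G` to the abelianization of `G`. -/
def conjToAb {G : Type*} [Group G] : ConjClasses G → Abelianization G :=
  Quotient.lift Abelianization.of (fun a b (h : IsConj a b) => by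
    obtain ⟨c, hc⟩ := h
    have : Abelianization.of (c * a) = Abelianization.of (b * c) := by
      rw [hc.eq]
    simpa [map_mul, mul_comm] using this)

@[simp] lemma conjToAb_mk {G : Type*} [Group G] (a : G) :
    conjToAb (ConjClasses.mk a) = Abelianization.of a := rfl

/-- The degree map sending a formal `ℤ`-combination of conjugacy classes to the corresponding
product in the abelianization. -/
noncomputable def degMap (G : Type*) [Group G] :
    (ConjClasses G →₀ ℤ) →+ Additive (Abelianization G) :=
  Finsupp.liftAddHom (fun c => (zmultiplesHom _) (Additive.ofMul (conjToAb c)))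

@[simp] lemma degMap_single {G : Type*} [Group G] (a : G) (k : ℤ) :
    degMap G (Finsupp.single (ConjClasses.mk a) k)
      = k • (Additive.ofMul (Abelianization.of a)) := by
  simp [degMap]

/-- `lambdaKer G` consists of the formal `ℤ`-combinations of conjugacy classes whose product
lies in the commutator subgroup; these are the (differences of) singular orbit data. -/
noncomputable def lambdaKer (G : Type*) [Group G] : AddSubgroup (ConjClasses G →₀ ℤ) :=
  (degMap G).ker

/-- The subgroup of relations: the class of the identity, and the cancelling pairs
`[γ̂, γ̂⁻¹]`. -/
noncomputable def bRel (G : Type*) [Group G] : AddSubgroup (ConjClasses G →₀ ℤ) :=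
  AddSubgroup.closure
    (insert (Finsupp.single (ConjClasses.mk (1 : G)) 1)
      {x | ∃ γ : G, x = Finsupp.single (ConjClasses.mk γ) 1
        + Finsupp.single (ConjClasses.mk γ⁻¹) 1})

/-- The group of singular orbit data `𝔹_G`. -/
abbrev BG (G : Type*) [Group G] :=
  (lambdaKer G) ⧸ ((bRel G).addSubgroupOf (lambdaKer G))

/-- The formal sum of conjugacy classes corresponding to a finite (multi)set of group
elements, presented as a list. -/
noncomputable def bdatum (G : Type*) [Group G] (l : List G) : ConjClasses G →₀ ℤ :=
  (l.map (fun γ => Finsupp.single (ConjClasses.mk γ) (1 : ℤ))).sum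

lemma degMap_bdatum {G : Type*} [Group G] (l : List G) :
    degMap G (bdatum G l) = Additive.ofMul (Abelianization.of l.prod) := by
  induction l with
  | nil => simp [bdatum]
  | cons a t ih =>
      have : bdatum G (a :: t) = Finsupp.single (ConjClasses.mk a) 1 + bdatum G t := by
        simp [bdatum]
      rw [this, map_add, ih, degMap_single]
      simp [← ofMul_mul]

lemma bdatum_mem_lambdaKer {G : Type*} [Group G] (l : List G)
    (h : l.prod ∈ commutator G) : bdatum G l ∈ lambdaKer G := by
  have : Abelianization.of l.prod = 1 := (QuotientGroup.eq_one_iff _).2 h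
  simp [lambdaKer, AddMonoidHom.mem_ker, degMap_bdatum, this]

lemma bdatum_mem_lambdaKer_of_prod_eq_one {G : Type*} [Group G] (l : List G)
    (h : l.prod = 1) : bdatum G l ∈ lambdaKer G :=
  bdatum_mem_lambdaKer l (by simp [h, Subgroup.one_mem])

/-- The element of `𝔹_G` determined by a list of group elements whose product lies in the
commutator subgroup. -/
noncomputable def bmk {G : Type*} [Group G] (l : List G) (h : bdatum G l ∈ lambdaKer G) :
    BG G :=
  QuotientAddGroup.mk (⟨bdatum G l, h⟩ : lambdaKer G)

/-! ### Virtual characters of abelian groups, permutation characters, and the quotient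
`R_ℂ G / E_G` with its conjugation involution. -/

/-- The additive group of virtual complex characters of an abelian group `G`
(`ℤ`-linear combinations of the irreducible characters, which for an abelian group are
exactly the homomorphisms `G → ℂˣ`), as a subgroup of the functions `G → ℂ`. -/
noncomputable def RCa (G : Type*) [CommGroup G] : AddSubgroup (G → ℂ) :=
  AddSubgroup.closure {f | ∃ χ : G →* ℂˣ, f = fun g => (χ g : ℂ)}

/-- The permutation character of the action of `G` on `G ⧸ H`, i.e. the character of the
representation induced from the trivial character of `H`; its value at `g` is the number
of fixed cosets. -/
noncomputable def permChar {G : Type*} [Group G] (H : Subgroup G) : G → ℂ :=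
  fun g => (Nat.card {x : G ⧸ H // g • x = x} : ℂ)

/-- The subgroup of `G → ℂ` generated by the characters induced from the trivial
character of subgroups of `G`. -/
noncomputable def EG (G : Type*) [Group G] : AddSubgroup (G → ℂ) :=
  AddSubgroup.closure {f | ∃ H : Subgroup G, f = permChar H}

/-- The quotient `R_ℂ G / E_G` of the group of virtual characters. -/
abbrev RTilde (G : Type*) [CommGroup G] :=
  (RCa G) ⧸ ((EG G).addSubgroupOf (RCa G))

/-- Pointwise complex conjugation of functions `G → ℂ`, as an additive homomorphism. -/
def conjFun (G : Type*) : (G → ℂ) →+ (G → ℂ) where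
  toFun f := fun g => starRingEnd ℂ (f g)
  map_zero' := by funext g; simp
  map_add' f₁ f₂ := by funext g; simp

lemma conjFun_RCa_le (G : Type*) [CommGroup G] : (RCa G).map (conjFun G) ≤ RCa G := by
  rw [RCa, AddMonoidHom.map_closure, AddSubgroup.closure_le]
  rintro _ ⟨f, ⟨χ, rfl⟩, rfl⟩
  apply AddSubgroup.subset_closure
  refine ⟨(Units.map ((starRingEnd ℂ) : ℂ →* ℂ)).comp χ, ?_⟩
  funext g
  simp [conjFun]

lemma conjFun_EG_le (G : Type*) [Group G] : (EG G).map (conjFun G) ≤ EG G := by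
  rw [EG, AddMonoidHom.map_closure, AddSubgroup.closure_le]
  rintro _ ⟨f, ⟨H, rfl⟩, rfl⟩
  apply AddSubgroup.subset_closure
  refine ⟨H, ?_⟩
  funext g
  simp [conjFun, permChar]

/-- The involution of `R_ℂ G / E_G` induced by complex conjugation of characters. -/
noncomputable def conjQ (G : Type*) [CommGroup G] : RTilde G →+ RTilde G :=
  QuotientAddGroup.map _ _
    (((conjFun G).comp (RCa G).subtype).codRestrict (RCa G)
      (fun x => conjFun_RCa_le G (AddSubgroup.mem_map_of_mem _ x.2)))
    (by
      intro x hx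
      rw [AddSubgroup.mem_addSubgroupOf] at hx
      rw [AddSubgroup.mem_comap, AddSubgroup.mem_addSubgroupOf]
      exact conjFun_EG_le G (AddSubgroup.mem_map_of_mem _ hx))

/-- The subgroup `𝔸_G = {a ∈ R_ℂ G / E_G : a + ā = 0}`. -/
noncomputable def AG (G : Type*) [CommGroup G] : AddSubgroup (RTilde G) :=
  (AddMonoidHom.id (RTilde G) + conjQ G).ker

lemma mem_AG_iff {G : Type*} [CommGroup G] (a : RTilde G) :
    a ∈ AG G ↔ a + conjQ G a = 0 := Iff.rfl

/-! ### The homomorphism `θ` for cyclic groups. -/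

/-- The cyclic group of order `n`, written multiplicatively. -/
abbrev Cyc (n : ℕ) := Multiplicative (ZMod n)

/-- The irreducible character `ρ_j` of the cyclic group `C_n`,
`ρ_j(x^v) = e^{2πi j v / n}`. -/
noncomputable def rho (n : ℕ) (j : ℕ) : Cyc n → ℂ :=
  fun g => Complex.exp (2 * (Real.pi : ℂ) * Complex.I * j * ((Multiplicative.toAdd g).val : ℂ) / n)

/-- For `i, j`, with `k = gcd(n, i)` and `i = l k`, the unique integer `r` with
`1 ≤ r ≤ n/k` and `r ≡ j l (mod n/k)`. -/
def rVal (n i j : ℕ) : ℕ :=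
  if (j * (i / n.gcd i)) % (n / n.gcd i) = 0 then n / n.gcd i
  else (j * (i / n.gcd i)) % (n / n.gcd i)

/-- The virtual character `∑_{j=1}^{n-1} (q - (1/n) ∑_s k_s r_{sj}) ρ_j` associated to the
singular orbit data given by the list `L = [x^{i_1}, …, x^{i_q}]`. -/
noncomputable def thetaFun (n : ℕ) (L : List (Cyc n)) : Cyc n → ℂ :=
  ∑ j ∈ Finset.Ico 1 n,
    ((L.length : ℂ)
        - (L.map (fun γ => ((n.gcd (Multiplicative.toAdd γ).val
            * rVal n (Multiplicative.toAdd γ).val j : ℕ) : ℂ))).sum / n)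
      • rho n j

/-- `θ : 𝔹_{C_n} → R_ℂ C_n / D_{C_n}` is the homomorphism sending the class of a
singular orbit datum `[x^{i_1}, …, x^{i_q}]` to the class of the virtual character
`∑_{j=1}^{n-1} (q - (1/n) ∑_s k_s r_{sj}) ρ_j`. -/
def IsTheta {n : ℕ} (θ : BG (Cyc n) →+ RTilde (Cyc n)) : Prop :=
  ∀ (L : List (Cyc n)) (hL : bdatum (Cyc n) L ∈ lambdaKer (Cyc n)) (r : RCa (Cyc n)),
    (r : Cyc n → ℂ) = thetaFun n L →
      θ (bmk L hL) = QuotientAddGroup.mk r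

section SingularOrbitData

variable {G : Type*} [Group G]

lemma bdatum_append (L₁ L₂ : List G) : bdatum G (L₁ ++ L₂) = bdatum G L₁ + bdatum G L₂ := by
  simp [bdatum]

lemma single_add_single_inv_mem_bRel (γ : G) :
    single (ConjClasses.mk γ) 1 + single (ConjClasses.mk γ⁻¹) 1 ∈ bRel G :=
  AddSubgroup.subset_closure (Set.mem_insert_of_mem _ ⟨γ, rfl⟩)

lemma bdatum_add_bdatum_map_inv_mem_bRel (L : List G) :
    bdatum G L + bdatum G (L.map (·⁻¹)) ∈ bRel G := by
  induction L with
  | nil => simp [bdatum]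
  | cons γ L ih =>
    have h := add_mem (single_add_single_inv_mem_bRel γ) ih
    simp only [bdatum, List.map_cons, List.sum_cons] at h ⊢
    convert h using 1
    abel

lemma bRel_le_lambdaKer : bRel G ≤ lambdaKer G := by
  rw [bRel, AddSubgroup.closure_le]
  rintro f (rfl | ⟨γ, rfl⟩) <;> simp [lambdaKer]

lemma bdatum_map_inv_mem_lambdaKer {L : List G} (hL : bdatum G L ∈ lambdaKer G) :
    bdatum G (L.map (·⁻¹)) ∈ lambdaKer G := by
  simpa using sub_mem (bRel_le_lambdaKer (bdatum_add_bdatum_map_inv_mem_bRel L)) hL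

/-- The combinations with this property form a subgroup, since `-bdatum L ≡ bdatum L⁻¹`. -/
lemma exists_sub_bdatum_mem_bRel (f : ConjClasses G →₀ ℤ) : ∃ L, f - bdatum G L ∈ bRel G := by
  let S : AddSubgroup (ConjClasses G →₀ ℤ) :=
    { carrier := {f | ∃ L, f - bdatum G L ∈ bRel G}
      zero_mem' := ⟨[], by simp [bdatum]⟩
      add_mem' := by
        rintro f g ⟨L, hL⟩ ⟨M, hM⟩
        refine ⟨L ++ M, ?_⟩
        convert add_mem hL hM using 1
        rw [bdatum_append]
        abel
      neg_mem' := by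
        rintro f ⟨L, hL⟩
        refine ⟨L.map (·⁻¹), ?_⟩
        convert neg_mem (add_mem hL (bdatum_add_bdatum_map_inv_mem_bRel L)) using 1
        abel }
  change f ∈ S
  induction f using Finsupp.induction_linear with
  | zero => exact S.zero_mem
  | add f g hf hg => exact S.add_mem hf hg
  | single c k =>
    obtain ⟨γ, rfl⟩ := ConjClasses.mk_surjective c
    have hγ : single (ConjClasses.mk γ) 1 ∈ S := ⟨[γ], by simp [bdatum]⟩
    simpa using S.zsmul_mem hγ k

lemma BG.exists_eq_bmk (α : BG G) : ∃ L hL, α = bmk (G := G) L hL := by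
  induction α using QuotientAddGroup.induction_on with
  | H f =>
    obtain ⟨L, hL⟩ := exists_sub_bdatum_mem_bRel (f : ConjClasses G →₀ ℤ)
    have hLker : bdatum G L ∈ lambdaKer G := by
      simpa using sub_mem f.2 (bRel_le_lambdaKer hL)
    refine ⟨L, hLker, (QuotientAddGroup.eq_iff_sub_mem).2 ?_⟩
    simpa [AddSubgroup.mem_addSubgroupOf] using hL

lemma neg_bmk (L : List G) (hL : bdatum G L ∈ lambdaKer G) :
    -bmk L hL = bmk (L.map (·⁻¹)) (bdatum_map_inv_mem_lambdaKer hL) := by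
  rw [neg_eq_iff_add_eq_zero, bmk, bmk, ← QuotientAddGroup.mk_add,
    QuotientAddGroup.eq_zero_iff, AddSubgroup.mem_addSubgroupOf]
  exact bdatum_add_bdatum_map_inv_mem_bRel L

end SingularOrbitData

lemma prod_eq_one_of_bdatum_mem_lambdaKer {G : Type*} [CommGroup G] {L : List G}
    (hL : bdatum G L ∈ lambdaKer G) : L.prod = 1 := by
  have h : Abelianization.of L.prod = 1 := by
    simpa [lambdaKer, degMap_bdatum] using hL
  simpa using congrArg Abelianization.equivOfComm.symm h

lemma rVal_modEq (n i j : ℕ) : rVal n i j ≡ j * (i / n.gcd i) [MOD n / n.gcd i] := by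
  unfold rVal
  split_ifs with h
  · exact (Nat.mod_self _).trans h.symm
  · exact Nat.mod_modEq _ _

lemma gcd_mul_rVal_modEq (n i j : ℕ) : n.gcd i * rVal n i j ≡ j * i [MOD n] := by
  have h := (rVal_modEq n i j).mul_left' (n.gcd i)
  rwa [Nat.mul_div_cancel' (Nat.gcd_dvd_left n i), mul_left_comm,
    Nat.mul_div_cancel' (Nat.gcd_dvd_right n i)] at h

lemma rVal_congr {n i i' j j' : ℕ} (hg : n.gcd i' = n.gcd i)
    (h : j' * (i' / n.gcd i) ≡ j * (i / n.gcd i) [MOD n / n.gcd i]) :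
    rVal n i' j' = rVal n i j := by
  unfold rVal
  rw [hg, h]

/-- With `n = k m` and `i = k l`, both sides are the representative in `[1, m]` of
`j (m - l) ≡ -j l ≡ (n - j) l (mod m)`. -/
lemma rVal_sub_left {n i j : ℕ} (hi : i ≤ n) (hj : j ≤ n) :
    rVal n (n - i) j = rVal n i (n - j) := by
  have hg : n.gcd (n - i) = n.gcd i := Nat.gcd_self_sub_right hi
  refine rVal_congr hg ?_
  obtain ⟨m, hm⟩ := Nat.gcd_dvd_left n i
  obtain ⟨l, hl⟩ := Nat.gcd_dvd_right n i
  generalize n.gcd i = k at hm hl ⊢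
  subst hm hl
  rcases Nat.eq_zero_or_pos k with rfl | hk
  · simp
  have hlm : l ≤ m := Nat.le_of_mul_le_mul_left hi hk
  rw [← Nat.mul_sub, Nat.mul_div_cancel_left _ hk, Nat.mul_div_cancel_left _ hk,
    Nat.mul_div_cancel_left _ hk, Nat.modEq_iff_dvd]
  push_cast [Nat.cast_sub hlm, Nat.cast_sub hj]
  exact ⟨k * l - j, by ring⟩

/-- The sum `∑ₛ kₛ r_{sj}` in the coefficient of `ρ_j` in `θ [x^{i_1}, …, x^{i_q}]`. -/
def krSum (n : ℕ) (L : List (Cyc n)) (j : ℕ) : ℕ :=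
  (L.map fun γ => n.gcd (Multiplicative.toAdd γ).val * rVal n (Multiplicative.toAdd γ).val j).sum

section Cyclic

variable {n : ℕ} [NeZero n]

lemma natCast_krSum (L : List (Cyc n)) (j : ℕ) :
    (krSum n L j : ZMod n) = j * Multiplicative.toAdd L.prod := by
  induction L with
  | nil => simp [krSum]
  | cons γ L ih =>
    have hγ := (ZMod.natCast_eq_natCast_iff _ _ _).2
      (gcd_mul_rVal_modEq n (Multiplicative.toAdd γ).val j)
    simp only [krSum, List.map_cons, List.sum_cons, List.prod_cons, toAdd_mul,
      Nat.cast_add] at ih hγ ⊢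
    rw [ih, hγ, Nat.cast_mul, ZMod.natCast_zmod_val, mul_add]

lemma dvd_krSum {L : List (Cyc n)} (hL : L.prod = 1) (j : ℕ) : n ∣ krSum n L j := by
  rw [← ZMod.natCast_eq_zero_iff, natCast_krSum, hL, toAdd_one, mul_zero]

lemma krSum_map_inv (L : List (Cyc n)) {j : ℕ} (hj : j ≤ n) :
    krSum n (L.map (·⁻¹)) j = krSum n L (n - j) := by
  simp only [krSum, List.map_map]
  congr 1
  refine List.map_congr_left fun γ _ => ?_
  simp only [Function.comp_apply, toAdd_inv]
  rcases eq_or_ne (Multiplicative.toAdd γ) 0 with h | h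
  · simp [h, rVal]
  · have : NeZero (Multiplicative.toAdd γ) := ⟨h⟩
    rw [ZMod.val_neg_of_ne_zero, Nat.gcd_self_sub_right (ZMod.val_le _),
      rVal_sub_left (ZMod.val_le _) hj]

lemma rho_apply (j : ℕ) (g : Cyc n) :
    rho n j g = ZMod.stdAddChar ((j : ZMod n) * Multiplicative.toAdd g) := by
  rw [ZMod.stdAddChar_apply, ← ZMod.natCast_zmod_val (Multiplicative.toAdd g), ← Nat.cast_mul,
    ZMod.toCircle_natCast, rho]
  push_cast
  ring_nf

lemma rho_mem_RCa (j : ℕ) : rho n j ∈ RCa (Cyc n) :=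
  AddSubgroup.subset_closure
    ⟨(ZMod.stdAddChar.mulShift (j : ZMod n)).toMonoidHom.toHomUnits, funext (rho_apply j)⟩

lemma conjFun_rho {j : ℕ} (hj : j ≤ n) : conjFun (Cyc n) (rho n j) = rho n (n - j) := by
  funext g
  simp only [conjFun, AddMonoidHom.coe_mk, ZeroHom.coe_mk, rho_apply]
  rw [← AddChar.map_neg_eq_conj, Nat.cast_sub hj, ZMod.natCast_self, zero_sub, neg_mul]

lemma thetaFun_eq_sum_zsmul {L : List (Cyc n)} (hL : L.prod = 1) :
    thetaFun n L = ∑ j ∈ Finset.Ico 1 n,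
      ((L.length : ℤ) - (krSum n L j / n : ℕ)) • rho n j := by
  refine Finset.sum_congr rfl fun j _ => ?_
  rw [← Int.cast_smul_eq_zsmul ℂ]
  congr 1
  have hS : (L.map fun γ => ((n.gcd (Multiplicative.toAdd γ).val
      * rVal n (Multiplicative.toAdd γ).val j : ℕ) : ℂ)).sum = (krSum n L j : ℂ) := by
    rw [krSum, Nat.cast_list_sum, List.map_map]
    rfl
  rw [hS, Int.cast_sub, Int.cast_natCast, Int.cast_natCast,
    Nat.cast_div (dvd_krSum hL j) (NeZero.ne (n : ℂ))]

lemma thetaFun_mem_RCa {L : List (Cyc n)} (hL : L.prod = 1) : thetaFun n L ∈ RCa (Cyc n) := by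
  rw [thetaFun_eq_sum_zsmul hL]
  exact AddSubgroup.sum_mem _ fun j _ => AddSubgroup.zsmul_mem _ (rho_mem_RCa j) _

lemma conjFun_thetaFun {L : List (Cyc n)} (hL : L.prod = 1) :
    conjFun (Cyc n) (thetaFun n L) = thetaFun n (L.map (·⁻¹)) := by
  have hL' : (L.map (·⁻¹)).prod = 1 := by rw [← List.prod_inv, hL, inv_one]
  have hreflect (f : ℕ → Cyc n → ℂ) :
      ∑ j ∈ Finset.Ico 1 n, f (n - j) = ∑ j ∈ Finset.Ico 1 n, f j := by
    rw [Finset.sum_Ico_reflect _ _ (Nat.le_succ n), Nat.add_sub_cancel, Nat.add_sub_cancel_left]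
  rw [thetaFun_eq_sum_zsmul hL, thetaFun_eq_sum_zsmul hL', map_sum, ← hreflect]
  refine Finset.sum_congr rfl fun j hj => ?_
  have hjn : j ≤ n := (Finset.mem_Ico.1 hj).2.le
  rw [map_zsmul, conjFun_rho (Nat.sub_le n j), Nat.sub_sub_self hjn, List.length_map,
    krSum_map_inv L hjn]

end Cyclic

/-- For every `α ∈ 𝔹_{C_n}` one has `θ(-α) = conj (θ α)`; consequently
`θ(α) + conj (θ α) = 0`, i.e. the image of `θ` is contained in
`𝔸_{C_n} = {a : a + ā = 0}`. -/
theorem theta_neg_eq_conj (n : ℕ) [NeZero n] (θ : BG (Cyc n) →+ RTilde (Cyc n))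
    (hθ : IsTheta θ) :
    (∀ α : BG (Cyc n), θ (-α) = conjQ (Cyc n) (θ α)) ∧
    (∀ α : BG (Cyc n), θ α ∈ AG (Cyc n)) := by
  have hneg (α : BG (Cyc n)) : θ (-α) = conjQ (Cyc n) (θ α) := by
    obtain ⟨L, hL, rfl⟩ := BG.exists_eq_bmk α
    have hprod := prod_eq_one_of_bdatum_mem_lambdaKer hL
    have hprod' : (L.map (·⁻¹)).prod = 1 := by rw [← List.prod_inv, hprod, inv_one]
    rw [neg_bmk, hθ _ _ ⟨_, thetaFun_mem_RCa hprod'⟩ rfl, hθ L hL ⟨_, thetaFun_mem_RCa hprod⟩ rfl]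
    exact congrArg QuotientAddGroup.mk (Subtype.ext (conjFun_thetaFun hprod).symm)
  refine ⟨hneg, fun α => ?_⟩
  rw [mem_AG_iff, ← hneg, ← map_add, add_neg_cancel, map_zero]
end

section
/- Let $f:H\to G$ be an injective homomorphism of finite abelian groups. Then the induced homomorphism $\mathbb{B}_f:\mathbb{B}_H\to\mathbb{B}_G$ is injective. -/
open Finsupp

/-- The additive map on formal sums of conjugacy classes induced by a group homomorphism. -/
noncomputable def ccFinsuppMap {H G : Type*} [Group H] [Group G] (f : H →* G) :
    (ConjClasses H →₀ ℤ) →+ (ConjClasses G →₀ ℤ) :=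
  Finsupp.mapDomain.addMonoidHom (ConjClasses.map f)

@[simp] lemma ccFinsuppMap_single {H G : Type*} [Group H] [Group G] (f : H →* G)
    (a : H) (k : ℤ) :
    ccFinsuppMap f (Finsupp.single (ConjClasses.mk a) k)
      = Finsupp.single (ConjClasses.mk (f a)) k := by
  simp [ccFinsuppMap, Finsupp.mapDomain_single]
  rfl

lemma degMap_ccFinsuppMap {H G : Type*} [Group H] [Group G] (f : H →* G)
    (x : ConjClasses H →₀ ℤ) :
    degMap G (ccFinsuppMap f x)
      = MonoidHom.toAdditive (Abelianization.map f) (degMap H x) := by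
  have : (degMap G).comp (ccFinsuppMap f)
      = (MonoidHom.toAdditive (Abelianization.map f)).comp (degMap H) := by
    apply Finsupp.addHom_ext
    intro c k
    obtain ⟨a, rfl⟩ := ConjClasses.mk_surjective c
    simp
  exact DFunLike.congr_fun this x

lemma ccFinsuppMap_mem_lambdaKer {H G : Type*} [Group H] [Group G] (f : H →* G)
    {x : ConjClasses H →₀ ℤ} (hx : x ∈ lambdaKer H) :
    ccFinsuppMap f x ∈ lambdaKer G := by
  have hx' : degMap H x = 0 := hx
  simp [lambdaKer, AddMonoidHom.mem_ker, degMap_ccFinsuppMap, hx']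

lemma ccFinsuppMap_bRel_le {H G : Type*} [Group H] [Group G] (f : H →* G) :
    (bRel H).map (ccFinsuppMap f) ≤ bRel G := by
  rw [bRel, AddMonoidHom.map_closure, AddSubgroup.closure_le]
  rintro _ ⟨y, hy, rfl⟩
  rcases hy with h1 | ⟨γ, rfl⟩
  · subst h1
    apply AddSubgroup.subset_closure
    left
    simp
  · apply AddSubgroup.subset_closure
    right
    exact ⟨f γ, by simp⟩

/-- The functorial homomorphism `𝔹_f : 𝔹_H → 𝔹_G` induced by a group homomorphism
`f : H → G`. -/
noncomputable def BMap {H G : Type*} [Group H] [Group G] (f : H →* G) : BG H →+ BG G :=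
  QuotientAddGroup.map _ _
    (((ccFinsuppMap f).comp (lambdaKer H).subtype).codRestrict (lambdaKer G)
      (fun x => ccFinsuppMap_mem_lambdaKer f x.2))
    (by
      intro x hx
      rw [AddSubgroup.mem_addSubgroupOf] at hx
      rw [AddSubgroup.mem_comap, AddSubgroup.mem_addSubgroupOf]
      exact ccFinsuppMap_bRel_le f (AddSubgroup.mem_map_of_mem _ hx))

/-! In any group, `bRel G` is described by coefficients alone: it consists of the formal sums
whose coefficients at `c` and `c⁻¹` agree and which are even at every nontrivial self-inverse
class. Indeed, the part of such a sum supported on `{c, c⁻¹}` is a multiple of a generator, and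
peeling these parts off one at a time exhausts the support. Pushing forward along a map that is
injective on conjugacy classes (e.g. an injective homomorphism into an abelian group) preserves
the coefficients and commutes with `c ↦ c⁻¹`, so it reflects membership in `bRel`; since
`𝔹_H` is a quotient by (the trace of) `bRel H`, this is injectivity of `𝔹_f`. -/

instance ConjClasses.instInvolutiveInv {G : Type*} [Group G] : InvolutiveInv (ConjClasses G) where
  inv := Quotient.map (·⁻¹) fun a b hab => by
    obtain ⟨c, rfl⟩ := isConj_iff.1 hab
    exact isConj_iff.2 ⟨c, conj_inv.symm⟩
  inv_inv c := by
    obtain ⟨a, rfl⟩ := ConjClasses.mk_surjective c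
    exact congrArg ConjClasses.mk (inv_inv a)

@[simp] lemma ConjClasses.mk_inv {G : Type*} [Group G] (a : G) :
    ConjClasses.mk a⁻¹ = (ConjClasses.mk a)⁻¹ := rfl

@[simp] lemma ConjClasses.inv_one {G : Type*} [Group G] : (1 : ConjClasses G)⁻¹ = 1 :=
  congrArg ConjClasses.mk (_root_.inv_one)

lemma ConjClasses.map_inv {H G : Type*} [Group H] [Group G] (f : H →* G) (c : ConjClasses H) :
    ConjClasses.map f c⁻¹ = (ConjClasses.map f c)⁻¹ := by
  obtain ⟨a, rfl⟩ := ConjClasses.mk_surjective c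
  exact congrArg ConjClasses.mk (_root_.map_inv f a)

lemma ConjClasses.map_one {H G : Type*} [Group H] [Group G] (f : H →* G) :
    ConjClasses.map f 1 = 1 :=
  congrArg ConjClasses.mk (_root_.map_one f)

lemma ConjClasses.map_injective {H G : Type*} [Monoid H] [CommMonoid G] {f : H →* G}
    (hf : Function.Injective f) : Function.Injective (ConjClasses.map f) := by
  intro c d hcd
  obtain ⟨a, rfl⟩ := ConjClasses.mk_surjective c
  obtain ⟨b, rfl⟩ := ConjClasses.mk_surjective d
  exact congrArg ConjClasses.mk (hf (ConjClasses.mk_injective hcd))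

section Relations

variable {G : Type*} [Group G]

lemma single_one_mem_bRel (k : ℤ) : single (1 : ConjClasses G) k ∈ bRel G := by
  have h : single (ConjClasses.mk (1 : G)) (1 : ℤ) ∈ bRel G :=
    AddSubgroup.subset_closure (Set.mem_insert _ _)
  rw [ConjClasses.one_eq_mk_one]
  simpa [smul_single] using zsmul_mem h k

lemma single_add_single_inv_mem_bRel_s19 (c : ConjClasses G) (k : ℤ) :
    single c k + single c⁻¹ k ∈ bRel G := by
  obtain ⟨γ, rfl⟩ := ConjClasses.mk_surjective c
  have h : single (ConjClasses.mk γ) (1 : ℤ) + single (ConjClasses.mk γ⁻¹) 1 ∈ bRel G :=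
    AddSubgroup.subset_closure (Set.mem_insert_of_mem _ ⟨γ, rfl⟩)
  simpa [smul_add, smul_single] using zsmul_mem h k

def symmEvenSubgroup (G : Type*) [Group G] : AddSubgroup (ConjClasses G →₀ ℤ) where
  carrier := {x | ∀ c, x c⁻¹ = x c ∧ (c⁻¹ = c → c ≠ 1 → Even (x c))}
  add_mem' {x y} hx hy c :=
    ⟨by simp [(hx c).1, (hy c).1], fun hc hc1 => ((hx c).2 hc hc1).add ((hy c).2 hc hc1)⟩
  zero_mem' c := by simp
  neg_mem' {x} hx c := ⟨by simp [(hx c).1], fun hc hc1 => ((hx c).2 hc hc1).neg⟩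

lemma single_one_mem_symmEvenSubgroup (k : ℤ) :
    single (1 : ConjClasses G) k ∈ symmEvenSubgroup G := by
  intro c
  refine ⟨?_, fun _ hc1 => ?_⟩
  · classical
    simp [single_apply, eq_comm (a := (1 : ConjClasses G)), inv_eq_iff_eq_inv]
  · simp [Ne.symm hc1]

lemma single_add_single_inv_mem_symmEvenSubgroup (c : ConjClasses G) (k : ℤ) :
    single c k + single c⁻¹ k ∈ symmEvenSubgroup G := by
  intro d
  refine ⟨?_, fun hd _ => ?_⟩
  · classical
    simp only [Finsupp.add_apply, single_apply, inv_eq_iff_eq_inv, inv_inv]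
    exact add_comm _ _
  · classical
    simp only [Finsupp.add_apply, single_apply]
    by_cases h : c = d
    · subst h
      simp [hd]
    · have h' : c⁻¹ ≠ d := fun h' => h (by rw [← hd, ← h', inv_inv])
      simp [h, h']

lemma bRel_le_symmEvenSubgroup : bRel G ≤ symmEvenSubgroup G := by
  rw [bRel, AddSubgroup.closure_le]
  rintro _ (rfl | ⟨γ, rfl⟩)
  · exact single_one_mem_symmEvenSubgroup 1
  · exact single_add_single_inv_mem_symmEvenSubgroup (ConjClasses.mk γ) 1

lemma filter_mem_symmEvenSubgroup {x : ConjClasses G →₀ ℤ} (hx : x ∈ symmEvenSubgroup G)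
    (p : ConjClasses G → Prop) [DecidablePred p] (hp : ∀ c, p c⁻¹ ↔ p c) :
    x.filter p ∈ symmEvenSubgroup G := by
  intro c
  refine ⟨by simp [filter_apply, hp, (hx c).1], fun hc hc1 => ?_⟩
  rw [filter_apply]
  split_ifs
  · exact (hx c).2 hc hc1
  · exact Even.zero

lemma filter_eq_or_eq_inv_mem_bRel {x : ConjClasses G →₀ ℤ} (hx : x ∈ symmEvenSubgroup G)
    (c : ConjClasses G) [DecidablePred fun d => d = c ∨ d = c⁻¹] :
    x.filter (fun d => d = c ∨ d = c⁻¹) ∈ bRel G := by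
  by_cases hc : c⁻¹ = c
  · have hfilter : x.filter (fun d => d = c ∨ d = c⁻¹) = single c (x c) := by
      ext d
      by_cases hd : d = c <;> simp [hc, hd, eq_comm]
    rw [hfilter]
    by_cases hc1 : c = 1
    · rw [hc1]; exact single_one_mem_bRel _
    · obtain ⟨k, hk⟩ := (hx c).2 hc hc1
      have := single_add_single_inv_mem_bRel_s19 c k
      rwa [hc, ← single_add, ← hk] at this
  · have hfilter : x.filter (fun d => d = c ∨ d = c⁻¹) = single c (x c) + single c⁻¹ (x c) := by
      ext d
      by_cases hd : d = c
      · subst hd; simp [Ne.symm hc]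
      · by_cases hd' : d = c⁻¹
        · subst hd'; simp [hc, (hx c).1]
        · simp [hd, hd']
    rw [hfilter]
    exact single_add_single_inv_mem_bRel_s19 c _

lemma symmEvenSubgroup_le_bRel : symmEvenSubgroup G ≤ bRel G := by
  classical
  intro x hx
  induction hn : x.support.card using Nat.strong_induction_on generalizing x with
  | _ n ih =>
    obtain hx0 | ⟨c, hc⟩ := x.support.eq_empty_or_nonempty
    · rw [support_eq_empty.1 hx0]
      exact zero_mem _
    set p : ConjClasses G → Prop := fun d => d = c ∨ d = c⁻¹
    have hp : ∀ d, p d⁻¹ ↔ p d := fun d => by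
      simp only [p, inv_eq_iff_eq_inv, inv_inv, or_comm]
    have hlt : (x.filter (¬p ·)).support.card < n := by
      rw [← hn, support_filter]
      exact Finset.card_lt_card (Finset.filter_ssubset.2 ⟨c, hc, not_not.2 (Or.inl rfl)⟩)
    rw [← filter_add_filter_not x p]
    exact add_mem (filter_eq_or_eq_inv_mem_bRel hx c)
      (ih _ hlt (filter_mem_symmEvenSubgroup hx _ fun d => not_congr (hp d)) rfl)

theorem bRel_eq_symmEvenSubgroup : bRel G = symmEvenSubgroup G :=
  le_antisymm bRel_le_symmEvenSubgroup symmEvenSubgroup_le_bRel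

end Relations

lemma ccFinsuppMap_apply_map {H G : Type*} [Group H] [Group G] {f : H →* G}
    (hf : Function.Injective (ConjClasses.map f)) (x : ConjClasses H →₀ ℤ) (c : ConjClasses H) :
    ccFinsuppMap f x (ConjClasses.map f c) = x c :=
  mapDomain_apply hf x c

lemma mem_symmEvenSubgroup_of_ccFinsuppMap_mem {H G : Type*} [Group H] [Group G] {f : H →* G}
    (hf : Function.Injective (ConjClasses.map f)) {x : ConjClasses H →₀ ℤ}
    (hx : ccFinsuppMap f x ∈ symmEvenSubgroup G) : x ∈ symmEvenSubgroup H := by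
  intro c
  obtain ⟨hinv, heven⟩ := hx (ConjClasses.map f c)
  rw [← ConjClasses.map_inv, ccFinsuppMap_apply_map hf, ccFinsuppMap_apply_map hf] at hinv
  refine ⟨hinv, fun hc hc1 => ?_⟩
  rw [← ccFinsuppMap_apply_map hf]
  refine heven (by rw [← ConjClasses.map_inv, hc]) fun h => hc1 (hf ?_)
  rw [h, ConjClasses.map_one]

lemma mem_bRel_of_ccFinsuppMap_mem {H G : Type*} [Group H] [Group G] {f : H →* G}
    (hf : Function.Injective (ConjClasses.map f)) {x : ConjClasses H →₀ ℤ}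
    (hx : ccFinsuppMap f x ∈ bRel G) : x ∈ bRel H := by
  rw [bRel_eq_symmEvenSubgroup] at hx ⊢
  exact mem_symmEvenSubgroup_of_ccFinsuppMap_mem hf hx

lemma BG.mk_eq_zero_iff {G : Type*} [Group G] (x : lambdaKer G) :
    (x : BG G) = 0 ↔ (x : ConjClasses G →₀ ℤ) ∈ bRel G := by
  rw [QuotientAddGroup.eq_zero_iff, AddSubgroup.mem_addSubgroupOf]

lemma BMap_mk {H G : Type*} [Group H] [Group G] (f : H →* G) (x : lambdaKer H) :
    BMap f (x : BG H)
      = ((⟨ccFinsuppMap f x, ccFinsuppMap_mem_lambdaKer f x.2⟩ : lambdaKer G) : BG G) :=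
  rfl

lemma BMap_injective {H G : Type*} [Group H] [Group G] {f : H →* G}
    (hf : Function.Injective (ConjClasses.map f)) : Function.Injective (BMap f) := by
  refine (injective_iff_map_eq_zero _).2 fun a ha => ?_
  induction a using QuotientAddGroup.induction_on with
  | H x =>
    rw [BMap_mk, BG.mk_eq_zero_iff] at ha
    rw [BG.mk_eq_zero_iff]
    exact mem_bRel_of_ccFinsuppMap_mem hf ha

theorem BMap_injective_of_injective_general {H G : Type*} [CommGroup H] [CommGroup G]
    (f : H →* G) (hf : Function.Injective f) :
    Function.Injective (BMap f) :=
  BMap_injective (ConjClasses.map_injective hf)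

/-- If `f : H → G` is an injective homomorphism of finite abelian groups,
then the induced homomorphism `𝔹_f : 𝔹_H → 𝔹_G` is injective. -/
theorem BMap_injective_of_injective {H G : Type*} [CommGroup H] [CommGroup G]
    [Finite H] [Finite G] (f : H →* G) (hf : Function.Injective f) :
    Function.Injective (BMap f) :=
  BMap_injective_of_injective_general f hf
end
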